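/- arXiv:2412.00742 — 2 statements merged into one kernel-verified Lean document; each statement's English description precedes it below -/
import Mathlib

section
/- The constrained quadratic program min_{s ∈ ℝ^n} ‖s + d/(2α)‖² subject to sᵀ1 = 1 and 0 ≤ s_i ≤ 1 has, via the KKT conditions, the solution with entries s_j = max(−d_j/(2α) + λ, 0) for an appropriate Lagrange multiplier λ ∈ ℝ. -/
open Finset

/-- KKT solution of `min ‖s + d/(2α)‖²` over the probability simplex
`{s : sᵀ1 = 1, 0 ≤ sᵢ ≤ 1}`: the minimizer has the thresholded form
`s_j = (λ − d_j/(2α))₊` for an appropriate multiplier `λ`. -/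
theorem stmt11 {n : ℕ} (hn : 0 < n) (d : Fin n → ℝ) (α : ℝ) (hα : 0 < α) :
    ∃ lam : ℝ,
      (∑ j, max (-(d j / (2 * α)) + lam) 0 = 1) ∧
      (∀ j, 0 ≤ max (-(d j / (2 * α)) + lam) 0 ∧ max (-(d j / (2 * α)) + lam) 0 ≤ 1) ∧
      ∀ t : Fin n → ℝ, (∑ j, t j = 1) → (∀ j, 0 ≤ t j ∧ t j ≤ 1) →
        ∑ j, (max (-(d j / (2 * α)) + lam) 0 + d j / (2 * α)) ^ 2 ≤
          ∑ j, (t j + d j / (2 * α)) ^ 2 := by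
  set c : Fin n → ℝ := fun j => d j / (2 * α) with hc
  have hne : (Finset.univ : Finset (Fin n)).Nonempty := univ_nonempty_iff.mpr (Fin.pos_iff_nonempty.mp hn)
  set f : ℝ → ℝ := fun lam => ∑ j, max (-(c j) + lam) 0 with hf
  have hcont : Continuous f := by
    apply continuous_finset_sum
    intro j _
    exact (continuous_const.add continuous_id).max continuous_const
  set a : ℝ := Finset.univ.inf' hne c with ha
  set b : ℝ := Finset.univ.sup' hne c + 1 with hb
  have hab : a ≤ b := by
    have j : Fin n := ⟨0, hn⟩
    have h1 : a ≤ c j := Finset.inf'_le c (mem_univ j)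
    have h2 : c j ≤ Finset.univ.sup' hne c := Finset.le_sup' c (mem_univ j)
    rw [hb]; linarith
  have hfa : f a = 0 := by
    apply Finset.sum_eq_zero
    intro j _
    have : a ≤ c j := Finset.inf'_le c (mem_univ j)
    simp [max_eq_right]; linarith
  have hfb : (1 : ℝ) ≤ f b := by
    have h1 : ∀ j ∈ Finset.univ, (1:ℝ) ≤ max (-(c j) + b) 0 := by
      intro j _
      have : c j ≤ Finset.univ.sup' hne c := Finset.le_sup' c (mem_univ j)
      have : (1:ℝ) ≤ -(c j) + b := by rw [hb]; linarith
      exact le_trans this (le_max_left _ _)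
    calc (1:ℝ) = ∑ _j : Fin n, (1:ℝ) / n := by
          rw [Finset.sum_const, card_univ, Fintype.card_fin, nsmul_eq_mul]
          field_simp
      _ ≤ f b := by
          apply Finset.sum_le_sum
          intro j hj
          have hn1 : (1:ℝ) ≤ n := by exact_mod_cast hn
          calc (1:ℝ)/n ≤ 1 := by
                rw [div_le_one (by positivity)]; exact hn1
            _ ≤ _ := h1 j hj
  obtain ⟨lam, hlam, hflam⟩ := intermediate_value_Icc hab hcont.continuousOn
      (Set.mem_Icc.mpr ⟨by rw [hfa]; norm_num, hfb⟩)
  set s : Fin n → ℝ := fun j => max (-(c j) + lam) 0 with hs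
  have hsum : ∑ j, s j = 1 := hflam
  have hnn : ∀ j, 0 ≤ s j := fun j => le_max_right _ _
  have hle1 : ∀ j, s j ≤ 1 := by
    intro j
    have := Finset.single_le_sum (f := s) (fun i _ => hnn i) (mem_univ j)
    linarith [hsum ▸ this]
  refine ⟨lam, hsum, fun j => ⟨hnn j, hle1 j⟩, ?_⟩
  intro t ht hbd
  have key : 0 ≤ ∑ j, (t j - s j) * (s j + c j) := by
    have split : ∀ j, (t j - s j) * (s j + c j)
        = (t j - s j) * lam + (t j - s j) * (s j + c j - lam) := by
      intro j; ring
    rw [Finset.sum_congr rfl (fun j _ => split j), Finset.sum_add_distrib,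
        ← Finset.sum_mul, Finset.sum_sub_distrib, ht, hsum]
    simp only [sub_self, zero_mul, zero_add]
    apply Finset.sum_nonneg
    intro j _
    rcases le_or_gt (c j) lam with h | h
    · have : s j = -(c j) + lam := max_eq_left (by linarith)
      rw [this]; simp
    · have hs0 : s j = 0 := max_eq_right (by linarith)
      rw [hs0]
      have : (0:ℝ) ≤ t j := (hbd j).1
      nlinarith
  have expand : ∀ j, (t j + c j) ^ 2
      = (s j + c j) ^ 2 + (t j - s j) ^ 2 + 2 * ((t j - s j) * (s j + c j)) := by
    intro j; ring
  rw [Finset.sum_congr rfl (fun j _ => expand j)]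
  rw [Finset.sum_add_distrib, Finset.sum_add_distrib]
  have h1 : 0 ≤ ∑ j, (t j - s j) ^ 2 := Finset.sum_nonneg fun j _ => sq_nonneg _
  have h2 : 0 ≤ ∑ j, 2 * ((t j - s j) * (s j + c j)) := by
    rw [← Finset.mul_sum]; linarith
  linarith
end

section
/- Given sorted values d_1 ≤ d_2 ≤ ⋯ ≤ d_n and k < n, if α = (k/2)·d_{k+1} − (1/2)·Σ_{j=1}^{k} d_j > 0 and λ = 1/k + (1/(2kα))·Σ_{j=1}^{k} d_j, then the vector s with s_j = max(−d_j/(2α) + λ, 0) has exactly its first k entries positive (assuming d_k < d_{k+1}), satisfies Σ_j s_j = 1, and 0 ≤ s_j ≤ 1 for all j. -/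
/-! With `2α = k d_k - Σ_{j<k} d_j` (0-indexed), the definition of `λ` simplifies to
`λ = d_k / (2α)`, so `s_j = max ((d_k - d_j) / (2α)) 0`. The gap `d_{k-1} < d_k` and monotonicity
make `s_j` positive exactly for `j < k`, and on those indices the numerators add up to `2α`. -/

open Finset

theorem Monotone.lt_apply_iff_of_lt_of_succ {β : Type*} [LinearOrder β] {n : ℕ} {d : Fin n → β}
    (hd : Monotone d) {i j : Fin n} (hij : (i : ℕ) + 1 = j) (hgap : d i < d j) (l : Fin n) :
    d l < d j ↔ l < j := by
  refine ⟨fun hl => lt_of_not_ge fun hjl => (hd hjl).not_gt hl, fun hl => ?_⟩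
  exact (hd (Fin.le_def.2 (by omega))).trans_lt hgap

theorem Fin.sum_univ_eq_sum_castLE_of_eq_zero {M : Type*} [AddCommMonoid M] {n k : ℕ}
    (h : k ≤ n) (f : Fin n → M) (hf : ∀ j : Fin n, k ≤ (j : ℕ) → f j = 0) :
    ∑ j, f j = ∑ i : Fin k, f (Fin.castLE h i) := by
  refine Eq.trans ?_ (Finset.sum_map univ (Fin.castLEEmb h) f)
  refine (Finset.sum_subset (subset_univ _) fun j _ hj => hf j ?_).symm
  by_contra! hjk
  exact hj (mem_map.2 ⟨⟨j, hjk⟩, mem_univ _, rfl⟩)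

theorem sum_sub_div_card_mul_sub_sum {ι : Type*} [Fintype ι] (f : ι → ℝ) (t : ℝ)
    (h : Fintype.card ι * t - ∑ i, f i ≠ 0) :
    ∑ i, (t - f i) / (Fintype.card ι * t - ∑ i, f i) = 1 := by
  rw [← Finset.sum_div, Finset.sum_sub_distrib, Finset.sum_const, Finset.card_univ, nsmul_eq_mul,
    div_self h]

theorem one_div_add_mul_sum_eq_div {k t S α : ℝ} (hk : k ≠ 0) (hα : α ≠ 0)
    (h : 2 * α = k * t - S) : 1 / k + 1 / (2 * k * α) * S = t / (2 * α) := by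
  field_simp
  linear_combination h

theorem stmt12 {n k : ℕ} (hk : k < n) (d : Fin n → ℝ)
    (hmono : Monotone d)
    (hlt : d ⟨k - 1, by omega⟩ < d ⟨k, hk⟩)
    (α lam : ℝ)
    (hα : α = (k : ℝ) / 2 * d ⟨k, hk⟩ -
      (1 / 2) * ∑ i : Fin k, d (Fin.castLE hk.le i))
    (hαpos : 0 < α)
    (hlam : lam = 1 / (k : ℝ) +
      (1 / (2 * (k : ℝ) * α)) * ∑ i : Fin k, d (Fin.castLE hk.le i))
    (s : Fin n → ℝ) (hs : ∀ j, s j = max (-(d j / (2 * α)) + lam) 0) :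
    (∀ j : Fin n, 0 < s j ↔ (j : ℕ) < k) ∧ (∑ j, s j = 1) ∧
      ∀ j, 0 ≤ s j ∧ s j ≤ 1 := by
  set S := ∑ i : Fin k, d (Fin.castLE hk.le i)
  have h2α : 2 * α = k * d ⟨k, hk⟩ - S := by rw [hα]; ring
  have hk0 : k ≠ 0 := by
    rintro rfl
    have : 2 * α = 0 := by simpa [S] using h2α
    linarith
  have hs' : ∀ j, s j = max ((d ⟨k, hk⟩ - d j) / (2 * α)) 0 := fun j => by
    rw [hs, hlam, one_div_add_mul_sum_eq_div (by exact_mod_cast hk0) hαpos.ne' h2α]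
    ring_nf
  have hbelow : ∀ j : Fin n, d j < d ⟨k, hk⟩ ↔ (j : ℕ) < k :=
    hmono.lt_apply_iff_of_lt_of_succ (by simp only; omega) hlt
  have hpos : ∀ j : Fin n, 0 < s j ↔ (j : ℕ) < k := fun j => by
    rw [hs', lt_max_iff, lt_self_iff_false, or_false, div_pos_iff_of_pos_right (by positivity),
      sub_pos, hbelow]
  have hnn : ∀ j, 0 ≤ s j := fun j => (hs' j).symm ▸ le_max_right _ _
  have hzero : ∀ j : Fin n, k ≤ (j : ℕ) → s j = 0 := fun j hj =>
    ((hnn j).eq_or_lt.resolve_right ((hpos j).not.2 hj.not_gt)).symm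
  have hsum : ∑ j, s j = 1 := by
    rw [Fin.sum_univ_eq_sum_castLE_of_eq_zero hk.le s hzero]
    convert sum_sub_div_card_mul_sub_sum (fun i : Fin k => d (Fin.castLE hk.le i)) (d ⟨k, hk⟩)
      (by rw [Fintype.card_fin, ← h2α]; positivity) using 2 with i
    rw [hs', max_eq_left, Fintype.card_fin, ← h2α]
    exact div_nonneg (sub_nonneg.2 ((hbelow _).2 i.2).le) (by positivity)
  exact ⟨hpos, hsum, fun j => ⟨hnn j, hsum ▸ single_le_sum (fun i _ => hnn i) (mem_univ j)⟩⟩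
end
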